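/- Let R be a commutative ring and c₁, c₂, c₃ ∈ R. Define the Segre elements s₁ = −c₁, s₂ = −(c₁s₁ + c₂), s₃ = −(c₁s₂ + c₂s₁ + c₃), and the Schur elements S_{(2,1,0)} = c₁·c₂ − c₃ and S_{(1,1,1)} = c₁³ − 2·c₁·c₂ + c₃. Then 2700·S_{(2,1,0)} + 2340·S_{(1,1,1)} = 180·(−15·s₁·s₂ + 2·s₃). -/

import Mathlib

/-- For the Segre elements `s₁ = -c₁`, `s₂ = -(c₁s₁ + c₂)`,
`s₃ = -(c₁s₂ + c₂s₁ + c₃)` and the Schur elements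
`S₍₂,₁,₀₎ = c₁c₂ - c₃`, `S₍₁,₁,₁₎ = c₁³ - 2c₁c₂ + c₃`, one has
`2700 S₍₂,₁,₀₎ + 2340 S₍₁,₁,₁₎ = 180 (-15 s₁ s₂ + 2 s₃)`. -/
theorem flag_pushforward_rank_three
    (R : Type*) [CommRing R] (c₁ c₂ c₃ s₁ s₂ s₃ S₂₁₀ S₁₁₁ : R)
    (hs₁ : s₁ = -c₁) (hs₂ : s₂ = -(c₁ * s₁ + c₂))
    (hs₃ : s₃ = -(c₁ * s₂ + c₂ * s₁ + c₃))
    (hS₂₁₀ : S₂₁₀ = c₁ * c₂ - c₃)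
    (hS₁₁₁ : S₁₁₁ = c₁ ^ 3 - 2 * c₁ * c₂ + c₃) :
    2700 * S₂₁₀ + 2340 * S₁₁₁ = 180 * (-15 * s₁ * s₂ + 2 * s₃) := by
  subst hs₁ hs₂ hs₃ hS₂₁₀ hS₁₁₁
  ring
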